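/- For every integer k ≥ 3 and every real number θ, define g(θ) = ((k+4)/(2(k+2)²))·sin((k+2)θ) − ((k+2)/(2k²))·sin(kθ), so that g′(θ) = ((k+4)/(2(k+2)))·cos((k+2)θ) − ((k+2)/(2k))·cos(kθ). Then 2·g(θ)·cos(2θ) − sin(2θ)·g′(θ) = −d⁻_{k+2}·e_{k+2}(θ) + (d⁻_k − d⁻_{k+2})·e_k(θ) + d⁻_k·e_{k−2}(θ). -/

import Mathlib

open Real

/-- The weighted basis function `e_j(θ) = sin((j+2)θ)/(j+2) − sin(jθ)/j`. -/
noncomputable def eBasis (j : ℕ) (θ : ℝ) : ℝ :=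
  sin (((j : ℝ) + 2) * θ) / ((j : ℝ) + 2) - sin ((j : ℝ) * θ) / (j : ℝ)

/-- The tridiagonal coefficient `d⁻_j = (j+2)²·(j−2)/(4j²)`. -/
noncomputable def dMinus (j : ℕ) : ℝ :=
  ((j : ℝ) + 2) ^ 2 * ((j : ℝ) - 2) / (4 * (j : ℝ) ^ 2)

/-! The map `f ↦ 2 f cos 2θ − f' sin 2θ` sends the mode `sin (mθ)` to a combination of the modes
`sin ((m ± 2)θ)` (product-to-sum). Applied to the two modes of `g`, both sides of the identity become
combinations of `sin (jθ)` for `j = k + 4, k + 2, k, k − 2`, whose coefficients agree as rational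
functions of `k`. -/

theorem sin_mul_bracket_sin_two_mul (m θ : ℝ) :
    2 * sin (m * θ) * cos (2 * θ) - sin (2 * θ) * (m * cos (m * θ)) =
      (1 - m / 2) * sin ((m + 2) * θ) + (1 + m / 2) * sin ((m - 2) * θ) := by
  have h₁ := two_mul_sin_mul_cos (m * θ) (2 * θ)
  have h₂ := two_mul_sin_mul_cos (2 * θ) (m * θ)
  rw [show m * θ - 2 * θ = (m - 2) * θ by ring, show m * θ + 2 * θ = (m + 2) * θ by ring] at h₁
  rw [show 2 * θ - m * θ = -((m - 2) * θ) by ring, sin_neg,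
    show 2 * θ + m * θ = (m + 2) * θ by ring] at h₂
  linear_combination h₁ - m / 2 * h₂

/-- Tridiagonal action of the linearized operator `L⁻` on the basis function `e_k`:
with `g = e_k/2 − v_k`, one has
`{g, sin 2θ} = −d⁻_{k+2}·e_{k+2} + (d⁻_k − d⁻_{k+2})·e_k + d⁻_k·e_{k−2}`. -/
theorem lminus_eBasis (k : ℕ) (hk : 3 ≤ k) (θ : ℝ) :
    2 * (((k : ℝ) + 4) / (2 * ((k : ℝ) + 2) ^ 2) * sin (((k : ℝ) + 2) * θ) -
          ((k : ℝ) + 2) / (2 * (k : ℝ) ^ 2) * sin ((k : ℝ) * θ)) * cos (2 * θ) -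
      sin (2 * θ) * (((k : ℝ) + 4) / (2 * ((k : ℝ) + 2)) * cos (((k : ℝ) + 2) * θ) -
          ((k : ℝ) + 2) / (2 * (k : ℝ)) * cos ((k : ℝ) * θ)) =
    -(dMinus (k + 2)) * eBasis (k + 2) θ + (dMinus k - dMinus (k + 2)) * eBasis k θ +
      dMinus k * eBasis (k - 2) θ := by
  have hk₃ : (3 : ℝ) ≤ k := by exact_mod_cast hk
  have hk₀ : (k : ℝ) ≠ 0 := by positivity
  have hk₂ : (k : ℝ) + 2 ≠ 0 := by positivity
  have hk₂' : (k : ℝ) - 2 ≠ 0 := by linarith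
  have hsub : ((k - 2 : ℕ) : ℝ) = k - 2 := by rw [Nat.cast_sub (by omega)]; norm_num
  have hhi := sin_mul_bracket_sin_two_mul ((k : ℝ) + 2) θ
  have hlo := sin_mul_bracket_sin_two_mul (k : ℝ) θ
  rw [add_sub_cancel_right, show (k : ℝ) + 2 + 2 = k + 4 by ring] at hhi
  simp only [eBasis, dMinus, hsub, Nat.cast_add, Nat.cast_ofNat, sub_add_cancel,
    show (k : ℝ) + 2 + 2 = k + 4 by ring]
  linear_combination (norm := skip)
    (k + 4) / (2 * ((k : ℝ) + 2) ^ 2) * hhi - (k + 2) / (2 * (k : ℝ) ^ 2) * hlo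
  field_simp
  ring
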